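/- Let C be an orientation of a cycle of even length. If α_C(2) and γ_C are both non-zero and have different signs, then C is not quasirandom-forcing. -/

import Mathlib

open MeasureTheory
open scoped Classical

/-- An oriented graph on a finite vertex type `V`: at most one of `(v,w)`, `(w,v)` is an edge. -/
structure OrientedGraph (V : Type) [Fintype V] where
  edges : Finset (V × V)
  irrefl : ∀ e ∈ edges, e.1 ≠ e.2
  antisymm : ∀ v w : V, (v, w) ∈ edges → (w, v) ∉ edges

/-- The homomorphism density `t(H,U)` of an oriented graph `H` in a kernel `U`. -/
noncomputable def homDensity {V : Type} [Fintype V] (H : OrientedGraph V)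
    (U : ℝ → ℝ → ℝ) : ℝ :=
  ∫ x in Set.univ.pi (fun _ : V => Set.Icc (0 : ℝ) 1),
    ∏ e ∈ H.edges, U (x e.1) (x e.2)

/-- A kernel (bounded measurable) which is antisymmetric on `[0,1]²`. -/
def IsAntisymmetricKernel (U : ℝ → ℝ → ℝ) : Prop :=
  Measurable (Function.uncurry U) ∧
  (∃ M : ℝ, ∀ x ∈ Set.Icc (0 : ℝ) 1, ∀ y ∈ Set.Icc (0 : ℝ) 1, |U x y| ≤ M) ∧
  (∀ x ∈ Set.Icc (0 : ℝ) 1, ∀ y ∈ Set.Icc (0 : ℝ) 1, U x y = - U y x)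

/-- A kernel with values in `[-1/2, 1/2]` on the unit square. -/
def BoundedByHalf (U : ℝ → ℝ → ℝ) : Prop :=
  ∀ x ∈ Set.Icc (0 : ℝ) 1, ∀ y ∈ Set.Icc (0 : ℝ) 1, |U x y| ≤ 1 / 2

/-- A tournamenton. -/
def IsTournamenton (W : ℝ → ℝ → ℝ) : Prop :=
  Measurable (Function.uncurry W) ∧
  (∀ x ∈ Set.Icc (0 : ℝ) 1, ∀ y ∈ Set.Icc (0 : ℝ) 1, 0 ≤ W x y ∧ W x y ≤ 1) ∧
  (∀ x ∈ Set.Icc (0 : ℝ) 1, ∀ y ∈ Set.Icc (0 : ℝ) 1, W x y + W y x = 1)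

/-- Lebesgue measure restricted to the unit square. -/
noncomputable def squareMeasure : Measure (ℝ × ℝ) :=
  MeasureTheory.volume.restrict ((Set.Icc (0 : ℝ) 1) ×ˢ (Set.Icc (0 : ℝ) 1))

/-- An oriented graph `H` is quasirandom-forcing if every tournamenton `W` with
`t(H,W) = 2^{-‖H‖}` equals `1/2` almost everywhere. -/
def QuasirandomForcing {V : Type} [Fintype V] (H : OrientedGraph V) : Prop :=
  ∀ W : ℝ → ℝ → ℝ, IsTournamenton W →
    homDensity H W = (1 / 2 : ℝ) ^ H.edges.card →
    ∀ᵐ p : ℝ × ℝ ∂squareMeasure, W p.1 p.2 = 1 / 2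

/-- `H` is an orientation of the path `0 - 1 - ⋯ - m` (with `m` edges). -/
def IsPathOrientation {m : ℕ} (H : OrientedGraph (Fin (m + 1))) : Prop :=
  (∀ e ∈ H.edges, e.2.val = e.1.val + 1 ∨ e.1.val = e.2.val + 1) ∧
  (∀ i : ℕ, i < m → ∃ e ∈ H.edges,
    (e.1.val = i ∧ e.2.val = i + 1) ∨ (e.2.val = i ∧ e.1.val = i + 1))

/-- `C` is an orientation of the cycle `0 - 1 - ⋯ - (ℓ-1) - 0` of length `ℓ`. -/
def IsCycleOrientation {ℓ : ℕ} (C : OrientedGraph (Fin ℓ)) : Prop :=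
  (∀ e ∈ C.edges, e.2.val = (e.1.val + 1) % ℓ ∨ e.1.val = (e.2.val + 1) % ℓ) ∧
  (∀ i : Fin ℓ, ∃ e ∈ C.edges,
    (e.1 = i ∧ e.2.val = (i.val + 1) % ℓ) ∨ (e.2 = i ∧ e.1.val = (i.val + 1) % ℓ))

/-- `Q_{2k}`: the orientation of the path with `2k` edges in which all edges are oriented
away from the central vertex `k`; edges are `i+1 → i` for `i < k` and `i → i+1` for `k ≤ i`. -/
noncomputable def pathQ (k : ℕ) : OrientedGraph (Fin (2 * k + 1)) where
  edges := Finset.univ.filter fun e : Fin (2 * k + 1) × Fin (2 * k + 1) =>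
    (e.2.val < k ∧ e.1.val = e.2.val + 1) ∨ (k ≤ e.1.val ∧ e.2.val = e.1.val + 1)
  irrefl := by
    intro e he heq
    simp only [Finset.mem_filter, Finset.mem_univ, true_and] at he
    have h : e.1.val = e.2.val := congrArg Fin.val heq
    omega
  antisymm := by
    intro v w hvw hwv
    simp only [Finset.mem_filter, Finset.mem_univ, true_and] at hvw hwv
    omega

/-- `D_ℓ` (for even `ℓ = 2k`): the orientation of the cycle of length `ℓ` with all edges
oriented from vertex `0` towards vertex `k = ℓ/2`. -/
noncomputable def cycD (ℓ : ℕ) : OrientedGraph (Fin ℓ) where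
  edges := Finset.univ.filter fun e : Fin ℓ × Fin ℓ =>
    (e.1.val < ℓ / 2 ∧ e.2.val = e.1.val + 1) ∨
    (ℓ / 2 ≤ e.2.val ∧ e.1.val = e.2.val + 1) ∨
    (2 ≤ ℓ ∧ e.1.val = 0 ∧ e.2.val = ℓ - 1)
  irrefl := by
    intro e he heq
    simp only [Finset.mem_filter, Finset.mem_univ, true_and] at he
    have h : e.1.val = e.2.val := congrArg Fin.val heq
    have h1 := e.1.isLt
    omega
  antisymm := by
    intro v w hvw hwv
    simp only [Finset.mem_filter, Finset.mem_univ, true_and] at hvw hwv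
    have h1 := v.isLt
    have h2 := w.isLt
    omega

/-- The disjoint union `Q_{2 n 0} ∪ ⋯ ∪ Q_{2 n (k-1)}`. -/
noncomputable def QUnion (k : ℕ) (n : Fin k → ℕ) :
    OrientedGraph ((i : Fin k) × Fin (2 * n i + 1)) where
  edges := Finset.univ.filter fun e =>
    e.1.1 = e.2.1 ∧
      ((e.2.2.val < n e.1.1 ∧ e.1.2.val = e.2.2.val + 1) ∨
       (n e.1.1 ≤ e.1.2.val ∧ e.2.2.val = e.1.2.val + 1))
  irrefl := by
    intro e he heq
    simp only [Finset.mem_filter, Finset.mem_univ, true_and] at he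
    have h : e.1.2.val = e.2.2.val := by rw [heq]
    omega
  antisymm := by
    intro v w hvw hwv
    simp only [Finset.mem_filter, Finset.mem_univ, true_and] at hvw hwv
    have h : n v.1 = n w.1 := by rw [hvw.1]
    omega

/-- `F` (a set of edges on the vertex set `W`) can be obtained from the oriented graph `H`
by reversing a set `R` of edges of `H` whose cardinality satisfies `r`, and possibly adding
isolated vertices (the injection `φ` embeds the vertices of `H`). -/
def ObtainedBy {V W : Type} [Fintype V] [DecidableEq V] [Fintype W] [DecidableEq W]
    (H : OrientedGraph V) (F : Finset (W × W)) (r : ℕ → Prop) : Prop :=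
  ∃ φ : V → W, Function.Injective φ ∧
    ∃ R : Finset (V × V), R ⊆ H.edges ∧ r R.card ∧
      F = (H.edges \ R).image (fun e => (φ e.1, φ e.2)) ∪
          R.image (fun e => (φ e.2, φ e.1))

/-- The coefficient `α_C(2 n 0, …, 2 n (k-1))`: the number of edge subsets `F ⊆ E(C)` such
that the spanning subgraph `C⟨F⟩` is obtained from `Q_{2 n 0} ∪ ⋯ ∪ Q_{2 n (k-1)}` by
reversing an even number of edges and adding isolated vertices, minus the number of those
obtained by reversing an odd number of edges. -/
noncomputable def alphaCoeff {ℓ : ℕ} (C : OrientedGraph (Fin ℓ)) {k : ℕ}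
    (n : Fin k → ℕ) : ℤ :=
  ((C.edges.powerset.filter fun F => ObtainedBy (QUnion k n) F Even).card : ℤ) -
  ((C.edges.powerset.filter fun F => ObtainedBy (QUnion k n) F Odd).card : ℤ)

/-- `γ_C`: equal to `1` if `C` can be obtained from `D_ℓ` by reversing an even number of
edges, and `-1` otherwise. -/
noncomputable def gammaCoeff {ℓ : ℕ} (C : OrientedGraph (Fin ℓ)) : ℤ :=
  if ObtainedBy (cycD ℓ) C.edges Even then 1 else -1

/-!
Blow a `4 × 4` antisymmetric matrix `N` up to the step tournamenton equal to `1/2 + N i j` on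
the product of the `i`-th and `j`-th quarters of `[0, 1]`. Its density is `4^{-ℓ}` times
`∑_τ ∏_{(u,v) ∈ C} (1/2 + N (τ u) (τ v))`, summed over all colourings `τ` of the vertices
with four colours, so it suffices to find a nonzero `N` for which this sum is `2^ℓ`.

For `N = cyc4 / 4` (the cyclically oriented `4`-cycle) the rows and columns of `cyc4` sum to
zero, so the all-`1/2` matrix and `cyc4` annihilate each other in the product of transfer
matrices around `C`, and the sum is `2^ℓ + 4^{-ℓ} ∑_τ ∏_C cyc4`. Reorienting `C` into `D_ℓ`
multiplies the last sum by `γ_C`, and `D_ℓ` consists of two directed paths of length `ℓ/2`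
with common ends, so for `D_ℓ` the sum is `‖cyc4 ^ (ℓ/2)‖² > 0`.

For `N = d • bip4` (the complete bipartite orientation `{0, 1} → {2, 3}`) expand the product
over edge sets `F ⊆ C`. The entries of `bip4` sum to zero, so an edge of `F` that meets no other
edge of `F` kills its term: the terms with `#F = 1` vanish, and a term with `#F = 2` is
`± 4^{ℓ-1} d²` exactly when `F` is an orientation of `Q₂`. Hence the sum is
`2^ℓ (1 + d² α_C(2)) + O(d³ 8^ℓ)`.

So for small `d` the sum minus `2^ℓ` has the sign of `γ_C` at one kernel and the sign of
`α_C(2)` at the other, and the intermediate value theorem on the segment between them gives `N`.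
-/

open Finset
open scoped Matrix

section ColouringSums

variable {V ι : Type} [Fintype V] [DecidableEq V] [Fintype ι]

noncomputable def homSum (F : Finset (V × V)) (A : ι → ι → ℝ) : ℝ :=
  ∑ τ : V → ι, ∏ e ∈ F, A (τ e.1) (τ e.2)

theorem sum_comp_injective {W R : Type} [Fintype W] [DecidableEq W] [AddCommMonoid R]
    {φ : V → W} (hφ : φ.Injective) (g : (V → ι) → R) :
    ∑ τ : W → ι, g (τ ∘ φ) =
      (Fintype.card ι ^ (Fintype.card W - Fintype.card V)) • ∑ σ, g σ := by
  classical
  let e := Equiv.piEquivPiSubtypeProd (· ∈ Set.range φ) (fun _ => ι)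
  let r : (V → ι) ≃ (Set.range φ → ι) :=
    (Equiv.ofInjective φ hφ).arrowCongr (Equiv.refl ι)
  have hcard : Fintype.card ({w // w ∉ Set.range φ} → ι) =
      Fintype.card ι ^ (Fintype.card W - Fintype.card V) := by
    rw [Fintype.card_fun, Fintype.card_subtype_compl,
      ← Fintype.card_congr (Equiv.ofInjective φ hφ)]
  calc ∑ τ : W → ι, g (τ ∘ φ)
      = ∑ p : (Set.range φ → ι) × ({w // w ∉ Set.range φ} → ι), g (r.symm p.1) := by
        rw [← e.symm.sum_comp]
        refine Fintype.sum_congr _ _ fun p => congrArg g ?_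
        funext v
        simp [e, r, Equiv.piEquivPiSubtypeProd]
    _ = _ := by
        simp only [Fintype.sum_prod_type_right, Finset.sum_const, Finset.card_univ, hcard,
          r.symm.sum_comp]

theorem sum_sum_update {R : Type} [AddCommMonoid R] (v : V) (g : (V → ι) → R) :
    ∑ τ : V → ι, ∑ a, g (Function.update τ v a) = Fintype.card ι • ∑ τ, g τ := by
  let e := Equiv.funSplitAt v ι
  have hupd : ∀ (a b : ι) ρ, Function.update (e.symm (b, ρ)) v a = e.symm (a, ρ) := by
    intro a b ρ
    funext w
    by_cases hw : w = v
    · subst hw; simp [e]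
    · simp [e, hw]
  rw [← e.symm.sum_comp, ← e.symm.sum_comp, Fintype.sum_prod_type, Fintype.sum_prod_type_right]
  simp only [hupd, Finset.sum_const, Finset.card_univ]

theorem homSum_empty (A : ι → ι → ℝ) :
    homSum (∅ : Finset (V × V)) A = (Fintype.card ι : ℝ) ^ Fintype.card V := by
  simp [homSum]

theorem homSum_const (F : Finset (V × V)) (c : ℝ) :
    homSum F (fun _ _ : ι => c) = (Fintype.card ι : ℝ) ^ Fintype.card V * c ^ #F := by
  simp [homSum]

theorem homSum_const_mul (F : Finset (V × V)) (c : ℝ) (A : ι → ι → ℝ) :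
    homSum F (fun a b => c * A a b) = c ^ #F * homSum F A := by
  simp [homSum, Finset.prod_mul_distrib, Finset.mul_sum]

theorem homSum_const_add_mul (E : Finset (V × V)) (c d : ℝ) (A : ι → ι → ℝ) :
    homSum E (fun a b => c + d * A a b) =
      ∑ F ∈ E.powerset, c ^ (#E - #F) * d ^ #F * homSum F A := by
  simp only [homSum, add_comm c, Finset.prod_add, Finset.mul_sum]
  rw [Finset.sum_comm]
  refine Finset.sum_congr rfl fun F hF => Finset.sum_congr rfl fun τ _ => ?_
  rw [Finset.prod_mul_distrib, Finset.prod_const, Finset.prod_const,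
    Finset.card_sdiff_of_subset (Finset.mem_powerset.1 hF)]
  ring

theorem abs_homSum_le_of_abs_le_one (F : Finset (V × V)) {A : ι → ι → ℝ}
    (hA : ∀ a b, |A a b| ≤ 1) : |homSum F A| ≤ (Fintype.card ι : ℝ) ^ Fintype.card V := by
  calc |homSum F A| ≤ ∑ τ : V → ι, |∏ e ∈ F, A (τ e.1) (τ e.2)| :=
        Finset.abs_sum_le_sum_abs _ _
    _ ≤ ∑ _τ : V → ι, (1 : ℝ) := Finset.sum_le_sum fun τ _ => by
        rw [Finset.abs_prod]
        exact Finset.prod_le_one (fun _ _ => abs_nonneg _) fun _ _ => hA _ _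
    _ = _ := by simp

/-- Summing over the colours of the two ends of `e` first pulls out the factor `∑ a, ∑ b, A a b`. -/
theorem homSum_eq_zero_of_isolated_edge [Nonempty ι] {F : Finset (V × V)}
    {A : ι → ι → ℝ} (hA : ∑ a, ∑ b, A a b = 0) {e : V × V} (he : e ∈ F)
    (hne : e.1 ≠ e.2)
    (hiso : ∀ f ∈ F.erase e, f.1 ≠ e.1 ∧ f.1 ≠ e.2 ∧ f.2 ≠ e.1 ∧ f.2 ≠ e.2) :
    homSum F A = 0 := by
  have hsplit : ∀ (τ : V → ι) a b,
      ∏ f ∈ F, A (Function.update (Function.update τ e.1 a) e.2 b f.1)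
        (Function.update (Function.update τ e.1 a) e.2 b f.2) =
      A a b * ∏ f ∈ F.erase e, A (τ f.1) (τ f.2) := by
    intro τ a b
    rw [← Finset.mul_prod_erase F _ he, Function.update_self,
      Function.update_of_ne hne, Function.update_self]
    congr 1
    refine Finset.prod_congr rfl fun f hf => ?_
    obtain ⟨h11, h12, h21, h22⟩ := hiso f hf
    rw [Function.update_of_ne h12, Function.update_of_ne h11, Function.update_of_ne h22,
      Function.update_of_ne h21]
  have hcard : (Fintype.card ι : ℝ) ≠ 0 := Nat.cast_ne_zero.2 Fintype.card_ne_zero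
  have key : (Fintype.card ι : ℝ) * ((Fintype.card ι : ℝ) * homSum F A) = 0 := by
    simp only [homSum, ← nsmul_eq_mul]
    rw [← sum_sum_update e.2 fun τ => ∏ f ∈ F, A (τ f.1) (τ f.2), ← sum_sum_update e.1]
    refine Finset.sum_eq_zero fun τ _ => ?_
    simp only [hsplit, ← Finset.sum_mul, hA, zero_mul]
  simpa [hcard] using key

end ColouringSums

section Reversal

theorem injective_map_edge {V W : Type} {φ : V → W} (hφ : φ.Injective) :
    (fun e : V × V => (φ e.1, φ e.2)).Injective ∧
      (fun e : V × V => (φ e.2, φ e.1)).Injective :=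
  ⟨fun _ _ h => Prod.ext (hφ (Prod.ext_iff.1 h).1) (hφ (Prod.ext_iff.1 h).2),
    fun _ _ h => Prod.ext (hφ (Prod.ext_iff.1 h).2) (hφ (Prod.ext_iff.1 h).1)⟩

variable {V W ι : Type} [Fintype V] [DecidableEq V] [DecidableEq W]

def reversal (H : OrientedGraph V) (φ : V → W) (R : Finset (V × V)) : Finset (W × W) :=
  (H.edges \ R).image (fun e => (φ e.1, φ e.2)) ∪ R.image (fun e => (φ e.2, φ e.1))

theorem disjoint_reversal_parts (H : OrientedGraph V) {φ : V → W} (hφ : φ.Injective)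
    {R : Finset (V × V)} (hR : R ⊆ H.edges) :
    Disjoint ((H.edges \ R).image (fun e => (φ e.1, φ e.2)))
      (R.image (fun e => (φ e.2, φ e.1))) := by
  simp only [Finset.disjoint_left, Finset.mem_image, Finset.mem_sdiff, not_exists, not_and]
  rintro _ ⟨a, ⟨ha, -⟩, rfl⟩ b hb hba
  simp only [Prod.mk.injEq] at hba
  have hab : a = (b.2, b.1) := Prod.ext (hφ hba.1).symm (hφ hba.2).symm
  exact H.antisymm b.1 b.2 (hR hb) (hab ▸ ha)

theorem card_reversal (H : OrientedGraph V) {φ : V → W} (hφ : φ.Injective)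
    {R : Finset (V × V)} (hR : R ⊆ H.edges) : #(reversal H φ R) = #H.edges := by
  obtain ⟨hinj, hinj'⟩ := injective_map_edge hφ
  rw [reversal, Finset.card_union_of_disjoint (disjoint_reversal_parts H hφ hR),
    Finset.card_image_of_injective _ hinj, Finset.card_image_of_injective _ hinj',
    Finset.card_sdiff_of_subset hR, Nat.sub_add_cancel (Finset.card_le_card hR)]

variable [Fintype W] [Fintype ι]

theorem homSum_reversal (H : OrientedGraph V) {φ : V → W} (hφ : φ.Injective)
    {R : Finset (V × V)} (hR : R ⊆ H.edges) {A : ι → ι → ℝ}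
    (hA : ∀ a b, A b a = -A a b) :
    homSum (reversal H φ R) A = (-1) ^ #R *
      (Fintype.card ι : ℝ) ^ (Fintype.card W - Fintype.card V) * homSum H.edges A := by
  obtain ⟨hinj, hinj'⟩ := injective_map_edge hφ
  have hprod : ∀ τ : W → ι, ∏ e ∈ reversal H φ R, A (τ e.1) (τ e.2) =
      (-1) ^ #R * ∏ e ∈ H.edges, A ((τ ∘ φ) e.1) ((τ ∘ φ) e.2) := by
    intro τ
    have hrev : ∏ e ∈ R, A (τ (φ e.2)) (τ (φ e.1)) =
        (-1) ^ #R * ∏ e ∈ R, A (τ (φ e.1)) (τ (φ e.2)) := by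
      rw [Finset.prod_congr rfl fun e _ => hA (τ (φ e.1)) (τ (φ e.2)), Finset.prod_neg]
    rw [reversal, Finset.prod_union (disjoint_reversal_parts H hφ hR),
      Finset.prod_image hinj.injOn, Finset.prod_image hinj'.injOn, hrev,
      ← Finset.prod_sdiff hR]
    simp only [Function.comp_apply]
    ring
  simp only [homSum, hprod, ← Finset.mul_sum]
  rw [sum_comp_injective hφ fun σ : V → ι => ∏ e ∈ H.edges, A (σ e.1) (σ e.2),
    nsmul_eq_mul]
  push_cast
  ring

theorem ObtainedBy.card_eq {H : OrientedGraph V} {F : Finset (W × W)} {r : ℕ → Prop}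
    (h : ObtainedBy H F r) : #F = #H.edges := by
  obtain ⟨φ, hφ, R, hR, -, rfl⟩ := h
  exact card_reversal H hφ hR

theorem ObtainedBy.exists_homSum_eq {H : OrientedGraph V} {F : Finset (W × W)} {r : ℕ → Prop}
    (h : ObtainedBy H F r) {A : ι → ι → ℝ} (hA : ∀ a b, A b a = -A a b) :
    ∃ m, r m ∧ homSum F A = (-1) ^ m *
      (Fintype.card ι : ℝ) ^ (Fintype.card W - Fintype.card V) * homSum H.edges A := by
  obtain ⟨φ, hφ, R, hR, hr, rfl⟩ := h
  exact ⟨#R, hr, homSum_reversal H hφ hR hA⟩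

noncomputable def obtainedSign (H : OrientedGraph V) (F : Finset (W × W)) : ℤ :=
  (if ObtainedBy H F Even then 1 else 0) - (if ObtainedBy H F Odd then 1 else 0)

theorem obtainedSign_eq_zero_of_card_ne {H : OrientedGraph V} {F : Finset (W × W)}
    (h : #F ≠ #H.edges) : obtainedSign H F = 0 := by
  simp [obtainedSign, fun r => mt (ObtainedBy.card_eq (r := r)) h]

end Reversal

theorem alphaCoeff_eq_sum {ℓ : ℕ} (C : OrientedGraph (Fin ℓ)) {k : ℕ} (n : Fin k → ℕ) :
    alphaCoeff C n = ∑ F ∈ C.edges.powerset, obtainedSign (QUnion k n) F := by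
  simp only [alphaCoeff, obtainedSign, Finset.sum_sub_distrib, Finset.card_filter]
  push_cast
  rfl

theorem obtainedBy_even_or_odd_of_image_mk_eq {V : Type} [Fintype V] [DecidableEq V]
    {H G : OrientedGraph V} (h : H.edges.image Sym2.mk.uncurry = G.edges.image Sym2.mk.uncurry) :
    ObtainedBy H G.edges Even ∨ ObtainedBy H G.edges Odd := by
  set R := H.edges.filter (· ∉ G.edges)
  have hG : G.edges = reversal H id R := by
    ext ⟨a, b⟩
    simp only [reversal, Finset.mem_union, Finset.mem_image, Finset.mem_sdiff, Finset.mem_filter,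
      R, id, not_and, not_not]
    constructor
    · intro hf
      obtain ⟨⟨c, d⟩, he, hef⟩ :=
        Finset.mem_image.1 (h ▸ Finset.mem_image_of_mem Sym2.mk.uncurry hf)
      rcases Sym2.eq_iff.1 hef with ⟨rfl, rfl⟩ | ⟨rfl, rfl⟩
      · exact Or.inl ⟨_, ⟨he, fun _ => hf⟩, rfl⟩
      · exact Or.inr ⟨_, ⟨he, G.antisymm _ _ hf⟩, rfl⟩
    · rintro (⟨e, ⟨he, heG⟩, hab⟩ | ⟨⟨c, d⟩, ⟨he, heG⟩, hab⟩)
      · exact hab ▸ heG he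
      · obtain ⟨⟨x, y⟩, hg, hge⟩ :=
          Finset.mem_image.1 (h.symm ▸ Finset.mem_image_of_mem Sym2.mk.uncurry he)
        simp only [Prod.mk.injEq] at hab
        obtain ⟨rfl, rfl⟩ := hab
        rcases Sym2.eq_iff.1 hge with ⟨rfl, rfl⟩ | ⟨rfl, rfl⟩
        · exact absurd hg heG
        · exact hg
  rcases Nat.even_or_odd #R with hR | hR
  · exact Or.inl ⟨id, Function.injective_id, R, Finset.filter_subset _ _, hR, hG⟩
  · exact Or.inr ⟨id, Function.injective_id, R, Finset.filter_subset _ _, hR, hG⟩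

section Walks

variable {ι R : Type} [Fintype ι] [DecidableEq ι] [CommSemiring R]

theorem sum_prod_path (n : ℕ) (G : Fin n → Matrix ι ι R) (f : ι → ι → R) :
    ∑ τ : Fin (n + 1) → ι,
        f (τ 0) (τ (Fin.last n)) * ∏ i : Fin n, G i (τ i.castSucc) (τ i.succ) =
      ∑ a, ∑ b, f a b * (List.ofFn G).prod a b := by
  induction n generalizing f with
  | zero =>
    simpa [Matrix.one_apply] using (Equiv.funUnique (Fin 1) ι).sum_comp fun a => f a a
  | succ n ih =>
    rw [← (Fin.consEquiv fun _ => ι).sum_comp, Fintype.sum_prod_type]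
    simp only [Fin.consEquiv_apply, Fin.cons_zero, Fin.prod_univ_succ, Fin.castSucc_zero,
      Fin.cons_succ, ← Fin.succ_castSucc, List.ofFn_succ, List.prod_cons,
      Matrix.mul_apply, Finset.mul_sum]
    refine Finset.sum_congr rfl fun a _ => ?_
    rw [← Fin.succ_last, Finset.sum_comm]
    convert ih (fun i => G i.succ) (fun c b => f a b * G 0 a c) using 2 with τ _ c _
    · simp only [Fin.cons_succ]
      ring
    · exact Finset.sum_congr rfl fun b _ => by ring

theorem sum_prod_cycle (n : ℕ) [NeZero n] (G : Fin n → Matrix ι ι R) :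
    ∑ τ : Fin n → ι, ∏ i, G i (τ i) (τ (i + 1)) = (List.ofFn G).prod.trace := by
  obtain ⟨n, rfl⟩ := Nat.exists_eq_succ_of_ne_zero (NeZero.ne n)
  rw [List.ofFn_succ', List.prod_concat, Matrix.trace]
  simp only [Fin.prod_univ_castSucc, Fin.coeSucc_eq_succ, Fin.last_add_one, Matrix.diag,
    Matrix.mul_apply]
  convert sum_prod_path n (fun i => G i.castSucc) (fun a b => G (Fin.last n) b a) using 1
  · exact Finset.sum_congr rfl fun τ _ => mul_comm _ _
  · exact Finset.sum_congr rfl fun a _ => Finset.sum_congr rfl fun b _ => mul_comm _ _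

end Walks

theorem List.prod_map_add_of_mul_eq_zero {R : Type} [Ring R] (P : R) {L : List R} (hL : L ≠ [])
    (h : ∀ Q ∈ L, P * Q = 0 ∧ Q * P = 0) :
    (L.map (P + ·)).prod = P ^ L.length + L.prod := by
  induction L with
  | nil => exact absurd rfl hL
  | cons Q L ih =>
    rcases eq_or_ne L [] with rfl | hL'
    · simp
    have hQ := h Q List.mem_cons_self
    have hP : P * L.prod = 0 := by
      obtain ⟨Q', L', rfl⟩ := List.exists_cons_of_ne_nil hL'
      rw [List.prod_cons, ← mul_assoc, (h Q' (by simp)).1, zero_mul]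
    have hQP : Q * P ^ L.length = 0 := by
      obtain ⟨n, hn⟩ := Nat.exists_eq_succ_of_ne_zero (List.length_pos_iff.2 hL').ne'
      rw [hn, pow_succ', ← mul_assoc, hQ.2, zero_mul]
    rw [List.map_cons, List.prod_cons, ih hL' fun Q' hQ' => h Q' (List.mem_cons_of_mem _ hQ'),
      List.length_cons, List.prod_cons, add_mul, mul_add, mul_add, hP, hQP, pow_succ']
    abel

section CycleOrientations

variable {ℓ : ℕ} [NeZero ℓ]

theorem Fin.val_add_one_eq_ite (i : Fin ℓ) :
    ((i + 1 : Fin ℓ) : ℕ) = if (i : ℕ) + 1 = ℓ then 0 else (i : ℕ) + 1 := by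
  rw [Fin.val_add, Fin.val_one', Nat.add_mod_mod]
  split_ifs with h
  · rw [h, Nat.mod_self]
  · exact Nat.mod_eq_of_lt (by omega)

theorem Fin.eq_add_one_iff (i j : Fin ℓ) : j = i + 1 ↔ (j : ℕ) = ((i : ℕ) + 1) % ℓ := by
  rw [Fin.ext_iff, Fin.val_add, Fin.val_one', Nat.add_mod_mod]

def cycleEdge (o : Fin ℓ → Bool) (i : Fin ℓ) : Fin ℓ × Fin ℓ :=
  if o i then (i, i + 1) else (i + 1, i)

theorem uncurry_mk_cycleEdge (o : Fin ℓ → Bool) (i : Fin ℓ) :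
    Sym2.mk.uncurry (cycleEdge o i) = s(i, i + 1) := by
  unfold cycleEdge
  split_ifs
  · rfl
  · exact Sym2.eq_swap

theorem cycleEdge_injective (hℓ : 3 ≤ ℓ) (o : Fin ℓ → Bool) :
    (cycleEdge o).Injective := by
  intro i j hij
  have := congrArg Sym2.mk.uncurry hij
  rw [uncurry_mk_cycleEdge, uncurry_mk_cycleEdge, Sym2.eq_iff] at this
  rcases this with ⟨h, -⟩ | ⟨h1, h2⟩
  · exact h
  · subst h1
    have h1 := Fin.val_add_one_eq_ite j
    have h2' := Fin.val_add_one_eq_ite (j + 1)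
    rw [h2] at h2'
    have := j.isLt
    split_ifs at h1 h2' <;> omega

theorem image_uncurry_mk_cycleEdge (o o' : Fin ℓ → Bool) :
    (Finset.univ.image (cycleEdge o)).image Sym2.mk.uncurry =
      (Finset.univ.image (cycleEdge o')).image Sym2.mk.uncurry := by
  simp only [Finset.image_image, Function.comp_def, uncurry_mk_cycleEdge]

theorem IsCycleOrientation.exists_edges_eq {C : OrientedGraph (Fin ℓ)}
    (hC : IsCycleOrientation C) :
    ∃ o, C.edges = Finset.univ.image (cycleEdge o) := by
  refine ⟨fun i => decide ((i, i + 1) ∈ C.edges), Finset.ext fun e => ?_⟩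
  simp only [Finset.mem_image, Finset.mem_univ, true_and, cycleEdge, decide_eq_true_eq]
  constructor
  · intro he
    rcases hC.1 e he with h | h
    · rw [← Fin.eq_add_one_iff] at h
      exact ⟨e.1, by rw [if_pos (h ▸ he)]; exact Prod.ext rfl h.symm⟩
    · rw [← Fin.eq_add_one_iff] at h
      have hswap : (e.2, e.2 + 1) ∉ C.edges := by
        rw [← h]; exact C.antisymm e.1 e.2 he
      exact ⟨e.2, by rw [if_neg hswap]; exact Prod.ext h.symm rfl⟩
  · rintro ⟨i, rfl⟩
    split_ifs with h
    · exact h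
    · obtain ⟨e, he, ⟨h1, h2⟩ | ⟨h1, h2⟩⟩ := hC.2 i
      · rw [← Fin.eq_add_one_iff] at h2
        exact absurd ((Prod.ext h1 h2 : e = (i, i + 1)) ▸ he) h
      · rw [← Fin.eq_add_one_iff] at h2
        exact (Prod.ext h2 h1 : e = (i + 1, i)) ▸ he

theorem cycD_edges (hℓ : 2 ≤ ℓ) :
    (cycD ℓ).edges = Finset.univ.image (cycleEdge fun i => decide ((i : ℕ) < ℓ / 2)) := by
  ext ⟨a, b⟩
  simp only [cycD, cycleEdge, Finset.mem_filter, Finset.mem_univ, true_and, Finset.mem_image,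
    decide_eq_true_eq]
  have ha := a.isLt
  have hb := b.isLt
  constructor
  · rintro (⟨h1, h2⟩ | ⟨h1, h2⟩ | ⟨-, h1, h2⟩)
    on_goal 1 => refine ⟨a, ?_⟩
    on_goal 2 => refine ⟨b, ?_⟩
    on_goal 3 => refine ⟨b, ?_⟩
    all_goals
      split_ifs <;>
        simp only [Prod.mk.injEq, Fin.ext_iff, Fin.val_add_one_eq_ite, true_and, and_true] <;>
        split_ifs <;> omega
  · rintro ⟨i, hi⟩
    have := i.isLt
    split_ifs at hi <;> simp only [Prod.mk.injEq, Fin.ext_iff, Fin.val_add_one_eq_ite] at hi <;>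
      split_ifs at hi <;> omega

variable {ι : Type} [Fintype ι] [DecidableEq ι]

theorem homSum_image_cycleEdge (hℓ : 3 ≤ ℓ) (o : Fin ℓ → Bool) (A : ι → ι → ℝ) :
    homSum (Finset.univ.image (cycleEdge o)) A =
      (List.ofFn fun i => if o i then Matrix.of A else (Matrix.of A)ᵀ).prod.trace := by
  rw [homSum, ← sum_prod_cycle]
  refine Finset.sum_congr rfl fun τ _ => ?_
  rw [Finset.prod_image fun i _ j _ h => cycleEdge_injective hℓ o h]
  refine Finset.prod_congr rfl fun i _ => ?_
  unfold cycleEdge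
  split_ifs <;> rfl

theorem homSum_image_cycleEdge_const_add (hℓ : 3 ≤ ℓ) (o : Fin ℓ → Bool) (c : ℝ)
    {Q : ι → ι → ℝ} (hrow : ∀ a, ∑ b, Q a b = 0) (hcol : ∀ b, ∑ a, Q a b = 0) :
    homSum (Finset.univ.image (cycleEdge o)) (fun a b => c + Q a b) =
      homSum (Finset.univ.image (cycleEdge o)) (fun _ _ : ι => c) +
        homSum (Finset.univ.image (cycleEdge o)) Q := by
  set P : Matrix ι ι ℝ := Matrix.of fun _ _ => c
  have hP : ∀ Q' : Matrix ι ι ℝ, (∀ a, ∑ b : ι, Q' a b = 0) →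
      (∀ b, ∑ a : ι, Q' a b = 0) → P * Q' = 0 ∧ Q' * P = 0 := by
    intro Q' hr hc
    constructor <;> ext a b <;>
      simp [P, Matrix.mul_apply, ← Finset.mul_sum, ← Finset.sum_mul, hr, hc]
  simp only [homSum_image_cycleEdge hℓ]
  have hsplit : (List.ofFn fun i => if o i then Matrix.of (fun a b => c + Q a b)
      else (Matrix.of (fun a b => c + Q a b))ᵀ) =
      (List.ofFn fun i => if o i then Matrix.of Q else (Matrix.of Q)ᵀ).map (P + ·) := by
    rw [List.map_ofFn]
    congr 1
    funext i
    by_cases h : o i <;> ext a b <;> simp [h, P]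
  have hPT : Pᵀ = P := by ext; rfl
  rw [hsplit, List.prod_map_add_of_mul_eq_zero P (by simp [NeZero.ne ℓ]), List.length_ofFn,
    Matrix.trace_add]
  · have hconst : ∀ i, (if o i then Matrix.of (fun _ _ : ι => c)
        else (Matrix.of fun _ _ : ι => c)ᵀ) = P := fun i => by
      split_ifs
      · rfl
      · exact hPT
    simp only [hconst, List.ofFn_const, List.prod_replicate]
  · intro Q' hQ'
    obtain ⟨i, rfl⟩ := List.mem_ofFn.1 hQ'
    split_ifs
    · exact hP _ hrow hcol
    · exact hP _ hcol hrow

end CycleOrientations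

theorem homSum_cycD_pos {ι : Type} [Fintype ι] [DecidableEq ι] {k : ℕ} (hk : 2 ≤ k)
    {A : ι → ι → ℝ} (hA : Matrix.of A ^ k ≠ 0) : 0 < homSum (cycD (k + k)).edges A := by
  have : NeZero (k + k) := ⟨by omega⟩
  have hlist : (List.ofFn fun i : Fin (k + k) => if decide ((i : ℕ) < (k + k) / 2) = true
      then Matrix.of A else (Matrix.of A)ᵀ) =
      List.replicate k (Matrix.of A) ++ List.replicate k (Matrix.of A)ᵀ := by
    refine List.ext_getElem (by simp) fun n h _ => ?_
    simp only [List.getElem_ofFn, List.getElem_append, List.getElem_replicate,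
      List.length_replicate, decide_eq_true_eq]
    rw [List.length_ofFn] at h
    split_ifs <;> first | rfl | omega
  rw [cycD_edges (by omega), homSum_image_cycleEdge (by omega), hlist, List.prod_append,
    List.prod_replicate, List.prod_replicate, ← Matrix.transpose_pow,
    ← Matrix.conjTranspose_eq_transpose_of_trivial]
  exact lt_of_le_of_ne (Matrix.posSemidef_self_mul_conjTranspose _).trace_nonneg
    (Ne.symm (Matrix.trace_mul_conjTranspose_self_eq_zero_iff.not.2 hA))

namespace IsCycleOrientation

variable {ℓ : ℕ} [NeZero ℓ] {C : OrientedGraph (Fin ℓ)}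

theorem card_edges (hℓ : 3 ≤ ℓ) (hC : IsCycleOrientation C) : #C.edges = ℓ := by
  obtain ⟨o, hCo⟩ := hC.exists_edges_eq
  rw [hCo, Finset.card_image_of_injective _ (cycleEdge_injective hℓ o), Finset.card_univ,
    Fintype.card_fin]

theorem homSum_eq_gammaCoeff_mul (hℓ : 2 ≤ ℓ) (hC : IsCycleOrientation C) {ι : Type}
    [Fintype ι] {A : ι → ι → ℝ} (hA : ∀ a b, A b a = -A a b) :
    homSum C.edges A = gammaCoeff C * homSum (cycD ℓ).edges A := by
  obtain ⟨o, hCo⟩ := hC.exists_edges_eq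
  have himage : (cycD ℓ).edges.image Sym2.mk.uncurry = C.edges.image Sym2.mk.uncurry := by
    rw [hCo, cycD_edges hℓ, image_uncurry_mk_cycleEdge]
  have hval : ∀ r, ObtainedBy (cycD ℓ) C.edges r →
      ∃ m, r m ∧ homSum C.edges A = (-1) ^ m * homSum (cycD ℓ).edges A := fun r h => by
    simpa using h.exists_homSum_eq hA
  unfold gammaCoeff
  split_ifs with h
  · obtain ⟨m, hm, heq⟩ := hval _ h
    rw [heq, hm.neg_one_pow]
    simp
  · obtain ⟨m, hm, heq⟩ :=
      hval _ ((obtainedBy_even_or_odd_of_image_mk_eq himage).resolve_left h)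
    rw [heq, hm.neg_one_pow]
    simp

end IsCycleOrientation

def cyc4 : Fin 4 → Fin 4 → ℝ :=
  ![![0, -1, 0, 1], ![1, 0, -1, 0], ![0, 1, 0, -1], ![-1, 0, 1, 0]]

def bip4 : Fin 4 → Fin 4 → ℝ :=
  ![![0, 0, 1, 1], ![0, 0, 1, 1], ![-1, -1, 0, 0], ![-1, -1, 0, 0]]

theorem cyc4_antisymm (a b : Fin 4) : cyc4 b a = -cyc4 a b := by
  fin_cases a <;> fin_cases b <;> norm_num [cyc4]

theorem abs_cyc4_le (a b : Fin 4) : |cyc4 a b| ≤ 1 := by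
  fin_cases a <;> fin_cases b <;> norm_num [cyc4]

theorem sum_cyc4_row (a : Fin 4) : ∑ b, cyc4 a b = 0 := by
  fin_cases a <;> norm_num [cyc4, Fin.sum_univ_succ]

theorem sum_cyc4_col (b : Fin 4) : ∑ a, cyc4 a b = 0 := by
  fin_cases b <;> norm_num [cyc4, Fin.sum_univ_succ]

theorem cyc4_pow_three : Matrix.of cyc4 ^ 3 = (-4 : ℝ) • Matrix.of cyc4 := by
  ext a b
  fin_cases a <;> fin_cases b <;> norm_num [cyc4, pow_succ, Matrix.mul_apply, Fin.sum_univ_succ]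

theorem bip4_antisymm (a b : Fin 4) : bip4 b a = -bip4 a b := by
  fin_cases a <;> fin_cases b <;> norm_num [bip4]

theorem abs_bip4_le (a b : Fin 4) : |bip4 a b| ≤ 1 := by
  fin_cases a <;> fin_cases b <;> norm_num [bip4]

theorem sum_sum_bip4 : ∑ a, ∑ b, bip4 a b = 0 := by
  norm_num [bip4, Fin.sum_univ_succ]

theorem sum_sq_sum_bip4 : ∑ a, (∑ b, bip4 a b) ^ 2 = 16 := by
  norm_num [bip4, Fin.sum_univ_succ]

theorem Matrix.pow_succ_ne_zero_of_pow_three_eq_smul {ι : Type} [Fintype ι] [DecidableEq ι]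
    {A : Matrix ι ι ℝ} {c : ℝ} (hc : c ≠ 0) (h3 : A ^ 3 = c • A) (hA : A ≠ 0)
    (k : ℕ) :
    A ^ (k + 1) ≠ 0 := by
  induction k with
  | zero => simpa using hA
  | succ k ih =>
    intro h
    have : A ^ (k + 3) = c • A ^ (k + 1) := by
      rw [pow_add, h3, mul_smul_comm, ← pow_succ]
    rw [show k + 3 = k + 1 + 1 + 1 by ring, pow_succ, h, zero_mul, eq_comm,
      smul_eq_zero] at this
    exact this.elim hc ih

theorem cyc4_pow_ne_zero {k : ℕ} (hk : k ≠ 0) : Matrix.of cyc4 ^ k ≠ 0 := by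
  obtain ⟨k, rfl⟩ := Nat.exists_eq_succ_of_ne_zero hk
  refine Matrix.pow_succ_ne_zero_of_pow_three_eq_smul (by norm_num) cyc4_pow_three ?_ k
  intro h
  have := congrFun (congrFun h 0) 1
  norm_num [cyc4] at this

noncomputable abbrev Q2 : OrientedGraph ((_ : Fin 1) × Fin 3) := QUnion 1 fun _ => 1

theorem Q2_edges : Q2.edges = {(⟨0, 1⟩, ⟨0, 0⟩), (⟨0, 1⟩, ⟨0, 2⟩)} := by decide

theorem homSum_Q2 {ι : Type} [Fintype ι] (A : ι → ι → ℝ) :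
    homSum Q2.edges A = ∑ b, (∑ a, A b a) ^ 2 := by
  let e : ((_ : Fin 1) × Fin 3 → ι) ≃ ι × ι × ι :=
    { toFun := fun σ => (σ ⟨0, 1⟩, σ ⟨0, 0⟩, σ ⟨0, 2⟩)
      invFun := fun p v => ![p.2.1, p.1, p.2.2] v.2
      left_inv := fun σ => by
        funext ⟨i, j⟩
        fin_cases i; fin_cases j <;> rfl
      right_inv := fun p => rfl }
  rw [homSum, ← e.symm.sum_comp, Fintype.sum_prod_type, Q2_edges]
  refine Finset.sum_congr rfl fun b _ => ?_
  rw [sq, Finset.sum_mul_sum, Fintype.sum_prod_type]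
  refine Finset.sum_congr rfl fun a _ => Finset.sum_congr rfl fun c _ => ?_
  rw [Finset.prod_pair (by decide)]
  rfl

theorem injective_cherry {W : Type} {x y z : W} (hxy : x ≠ y) (hxz : x ≠ z) (hyz : y ≠ z) :
    (fun v : (_ : Fin 1) × Fin 3 => ![x, y, z] v.2).Injective := by
  rintro ⟨i, j⟩ ⟨i', j'⟩ h
  fin_cases i; fin_cases i'; fin_cases j <;> fin_cases j' <;> simp_all [eq_comm]

section Cherries

variable {W : Type} [Fintype W] [DecidableEq W]

theorem obtainedBy_Q2_outStar {x y z : W} (hxy : x ≠ y) (hxz : x ≠ z) (hyz : y ≠ z) :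
    ObtainedBy Q2 ({(y, x), (y, z)} : Finset (W × W)) Even :=
  ⟨_, injective_cherry hxy hxz hyz, ∅, Finset.empty_subset _, by simp, by simp [Q2_edges]⟩

theorem obtainedBy_Q2_inStar {x y z : W} (hxy : x ≠ y) (hxz : x ≠ z) (hyz : y ≠ z) :
    ObtainedBy Q2 ({(x, y), (z, y)} : Finset (W × W)) Even :=
  ⟨_, injective_cherry hxy hxz hyz, Q2.edges, subset_rfl, by rw [Q2_edges]; decide,
    by simp [Q2_edges]⟩

theorem obtainedBy_Q2_path {x y z : W} (hxy : x ≠ y) (hxz : x ≠ z) (hyz : y ≠ z) :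
    ObtainedBy Q2 ({(x, y), (y, z)} : Finset (W × W)) Odd := by
  have hrest : Q2.edges \ {(⟨0, 1⟩, ⟨0, 0⟩)} = {(⟨0, 1⟩, ⟨0, 2⟩)} := by
    rw [Q2_edges]; decide
  refine ⟨_, injective_cherry hxy hxz hyz, {(⟨0, 1⟩, ⟨0, 0⟩)}, by rw [Q2_edges]; decide,
    by simp, ?_⟩
  rw [hrest]
  simp [Finset.pair_comm]

end Cherries

theorem homSum_eq_of_card_eq_two {V : Type} [Fintype V] [DecidableEq V] {G : OrientedGraph V}
    {F : Finset (V × V)} (hF : F ⊆ G.edges) (hcard : #F = 2) {ι : Type} [Fintype ι]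
    [Nonempty ι] {A : ι → ι → ℝ} (hA : ∀ a b, A b a = -A a b) (hsum : ∑ a, ∑ b, A a b = 0)
    (hQ2 : homSum Q2.edges A ≠ 0) :
    homSum F A =
      (Fintype.card ι : ℝ) ^ (Fintype.card V - 3) * homSum Q2.edges A * obtainedSign Q2 F := by
  set K := (Fintype.card ι : ℝ) ^ (Fintype.card V - 3) * homSum Q2.edges A
  have hK : K ≠ 0 := mul_ne_zero (pow_ne_zero _ (Nat.cast_ne_zero.2 Fintype.card_ne_zero)) hQ2
  have hval : ∀ r, ObtainedBy Q2 F r → ∃ m, r m ∧ homSum F A = (-1) ^ m * K := fun r h => by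
    obtain ⟨m, hm, h⟩ := h.exists_homSum_eq hA
    exact ⟨m, hm, by rw [h, mul_assoc]; rfl⟩
  by_cases hE : ObtainedBy Q2 F Even <;> by_cases hO : ObtainedBy Q2 F Odd
  · obtain ⟨m, hm, h⟩ := hval _ hE
    obtain ⟨m', hm', h'⟩ := hval _ hO
    rw [h, hm.neg_one_pow, hm'.neg_one_pow] at h'
    exact absurd (by linarith) hK
  · obtain ⟨m, hm, h⟩ := hval _ hE
    simp [obtainedSign, hE, hO, h, hm.neg_one_pow]
  · obtain ⟨m, hm, h⟩ := hval _ hO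
    simp [obtainedSign, hE, hO, h, hm.neg_one_pow]
  simp only [obtainedSign, hE, hO, if_false, sub_zero, Int.cast_zero, mul_zero]
  obtain ⟨⟨a, b⟩, ⟨c, d⟩, hne, rfl⟩ := Finset.card_eq_two.1 hcard
  have hab := hF (Finset.mem_insert_self _ _)
  have hcd := hF (Finset.mem_insert_of_mem (Finset.mem_singleton_self _))
  have hab' : a ≠ b := G.irrefl _ hab
  have hcd' : c ≠ d := G.irrefl _ hcd
  by_cases hac : a = c
  · subst hac
    exact absurd (obtainedBy_Q2_outStar hab'.symm (fun h => hne (by rw [h])) hcd') hE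
  by_cases hbd : b = d
  · subst hbd
    exact absurd (obtainedBy_Q2_inStar hab' hac hcd'.symm) hE
  by_cases hbc : b = c
  · subst hbc
    exact absurd (obtainedBy_Q2_path hab' (fun h => G.antisymm _ _ hab (h ▸ hcd)) hcd') hO
  by_cases had : a = d
  · subst had
    rw [Finset.pair_comm] at hE hO
    exact absurd (obtainedBy_Q2_path hcd' (Ne.symm hbc) hab') hO
  refine homSum_eq_zero_of_isolated_edge hsum (Finset.mem_insert_self _ _) hab' fun f hf => ?_
  obtain ⟨hfne, hf⟩ := Finset.mem_erase.1 hf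
  obtain rfl : f = (c, d) := (Finset.mem_insert.1 hf).resolve_left hfne |> Finset.mem_singleton.1
  exact ⟨Ne.symm hac, Ne.symm hbc, Ne.symm had, Ne.symm hbd⟩

theorem abs_expansion_term_bip4_sub_le {ℓ : ℕ} (hℓ : 3 ≤ ℓ) {G : OrientedGraph (Fin ℓ)}
    {F : Finset (Fin ℓ × Fin ℓ)} (hF : F ⊆ G.edges) {d : ℝ} (hd0 : 0 ≤ d)
    (hd1 : d ≤ 1) :
    |(1 / 2) ^ (ℓ - #F) * d ^ #F * homSum F bip4 -
        ((if F = ∅ then 2 ^ ℓ else 0) + d ^ 2 * 2 ^ ℓ * obtainedSign Q2 F)| ≤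
      d ^ 3 * 4 ^ ℓ := by
  have hQ2 : #Q2.edges = 2 := by rw [Q2_edges]; rfl
  have hbound : 0 ≤ d ^ 3 * (4 : ℝ) ^ ℓ := by positivity
  rcases Nat.lt_or_ge #F 3 with hlt | hge
  · suffices (1 / 2) ^ (ℓ - #F) * d ^ #F * homSum F bip4 =
        (if F = ∅ then 2 ^ ℓ else 0) + d ^ 2 * 2 ^ ℓ * obtainedSign Q2 F by
      rw [this, sub_self, abs_zero]; exact hbound
    interval_cases h : #F
    · rw [Finset.card_eq_zero.1 h, homSum_empty, obtainedSign_eq_zero_of_card_ne (by simp [hQ2])]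
      have : (4 : ℝ) ^ ℓ = 2 ^ ℓ * 2 ^ ℓ := by rw [← mul_pow]; norm_num
      simp [this]
    · obtain ⟨e, rfl⟩ := Finset.card_eq_one.1 h
      rw [homSum_eq_zero_of_isolated_edge sum_sum_bip4 (Finset.mem_singleton_self e)
        (G.irrefl e (hF (Finset.mem_singleton_self e))) (by simp),
        obtainedSign_eq_zero_of_card_ne (by simp [hQ2])]
      simp
    · have hQ2 : homSum Q2.edges bip4 = 16 := by rw [homSum_Q2, sum_sq_sum_bip4]
      rw [homSum_eq_of_card_eq_two hF h bip4_antisymm sum_sum_bip4 (by rw [hQ2]; norm_num), hQ2,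
        if_neg (Finset.nonempty_iff_ne_empty.1 (Finset.card_pos.1 (by omega)))]
      have hpow : (1 / 2 : ℝ) ^ (ℓ - 2) * (4 ^ (ℓ - 3) * 16) = 2 ^ ℓ := by
        obtain ⟨m, rfl⟩ := Nat.exists_eq_add_of_le hℓ
        rw [show 3 + m - 2 = m + 1 by omega, show 3 + m - 3 = m by omega,
          show (4 : ℝ) ^ m = 2 ^ m * 2 ^ m by rw [← mul_pow]; norm_num, one_div_pow]
        field_simp
        ring
      simp only [Fintype.card_fin, Nat.cast_ofNat]
      rw [← hpow]
      ring
  · rw [obtainedSign_eq_zero_of_card_ne (by omega), if_neg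
      (Finset.nonempty_iff_ne_empty.1 (Finset.card_pos.1 (by omega)))]
    simp only [Int.cast_zero, mul_zero, add_zero, sub_zero, abs_mul]
    have hsum : |homSum F bip4| ≤ 4 ^ ℓ := by
      simpa using abs_homSum_le_of_abs_le_one F abs_bip4_le
    rw [abs_of_nonneg (by positivity : (0 : ℝ) ≤ (1 / 2) ^ (ℓ - #F)),
      abs_of_nonneg (by positivity)]
    calc (1 / 2) ^ (ℓ - #F) * d ^ #F * |homSum F bip4| ≤ 1 * d ^ 3 * 4 ^ ℓ :=
          mul_le_mul (mul_le_mul (pow_le_one₀ (by norm_num) (by norm_num))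
            (pow_le_pow_of_le_one hd0 hd1 hge) (by positivity) zero_le_one) hsum
            (abs_nonneg _) (by positivity)
      _ = d ^ 3 * 4 ^ ℓ := by ring

namespace IsCycleOrientation

variable {ℓ : ℕ} [NeZero ℓ] {C : OrientedGraph (Fin ℓ)}

theorem homSum_half_add_cyc4 (hℓ : 3 ≤ ℓ) (hC : IsCycleOrientation C) :
    homSum C.edges (fun a b => 1 / 2 + 1 / 4 * cyc4 a b) =
      2 ^ ℓ + (1 / 4) ^ ℓ * (gammaCoeff C * homSum (cycD ℓ).edges cyc4) := by
  obtain ⟨o, hCo⟩ := hC.exists_edges_eq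
  have hrow : ∀ a, ∑ b, 1 / 4 * cyc4 a b = 0 := fun a => by
    rw [← Finset.mul_sum, sum_cyc4_row, mul_zero]
  have hcol : ∀ b, ∑ a, 1 / 4 * cyc4 a b = 0 := fun b => by
    rw [← Finset.mul_sum, sum_cyc4_col, mul_zero]
  rw [hCo, homSum_image_cycleEdge_const_add hℓ o _ hrow hcol, ← hCo, homSum_const,
    homSum_const_mul, hC.card_edges hℓ, hC.homSum_eq_gammaCoeff_mul (by omega) cyc4_antisymm]
  simp only [Fintype.card_fin, Nat.cast_ofNat, ← mul_pow]
  norm_num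

theorem abs_homSum_half_add_bip4_sub_le (hℓ : 3 ≤ ℓ) (hC : IsCycleOrientation C) {d : ℝ}
    (hd0 : 0 ≤ d) (hd1 : d ≤ 1) :
    |homSum C.edges (fun a b => 1 / 2 + d * bip4 a b) - 2 ^ ℓ -
        d ^ 2 * 2 ^ ℓ * alphaCoeff C (fun _ : Fin 1 => 1)| ≤ d ^ 3 * 8 ^ ℓ := by
  have hmain : 2 ^ ℓ + d ^ 2 * 2 ^ ℓ * (alphaCoeff C (fun _ : Fin 1 => 1) : ℝ) =
      ∑ F ∈ C.edges.powerset,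
        ((if F = ∅ then 2 ^ ℓ else 0) + d ^ 2 * 2 ^ ℓ * obtainedSign Q2 F) := by
    rw [Finset.sum_add_distrib, Finset.sum_ite_eq' _ _ _, if_pos (Finset.empty_mem_powerset _),
      ← Finset.mul_sum, alphaCoeff_eq_sum]
    push_cast
    rfl
  rw [homSum_const_add_mul, hC.card_edges hℓ, sub_sub, hmain, ← Finset.sum_sub_distrib]
  calc _ ≤ ∑ F ∈ C.edges.powerset, d ^ 3 * 4 ^ ℓ := (Finset.abs_sum_le_sum_abs _ _).trans
        (Finset.sum_le_sum fun F hF =>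
          abs_expansion_term_bip4_sub_le hℓ (Finset.mem_powerset.1 hF) hd0 hd1)
    _ = d ^ 3 * 8 ^ ℓ := by
        rw [Finset.sum_const, Finset.card_powerset, hC.card_edges hℓ, nsmul_eq_mul]
        push_cast
        rw [show (8 : ℝ) = 2 * 4 by norm_num, mul_pow]
        ring

end IsCycleOrientation

noncomputable def quarter (x : ℝ) : Fin 4 :=
  if x < 1 / 4 then 0 else if x < 1 / 2 then 1 else if x < 3 / 4 then 2 else 3

theorem volume_Icc_inter_quarter_preimage (k : Fin 4) :
    volume (Set.Icc (0 : ℝ) 1 ∩ quarter ⁻¹' {k}) = 4⁻¹ := by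
  have hquarter : ENNReal.ofReal (1 / 4) = 4⁻¹ := by
    rw [one_div, ENNReal.ofReal_inv_of_pos (by norm_num)]
    norm_num
  have hIco : ∀ a : ℝ, volume (Set.Ico a (a + 1 / 4)) = 4⁻¹ := fun a => by
    rw [Real.volume_Ico, add_sub_cancel_left, hquarter]
  have hIcc : volume (Set.Icc (3 / 4 : ℝ) 1) = 4⁻¹ := by
    rw [Real.volume_Icc, ← hquarter]
    norm_num
  fin_cases k
  on_goal 1 => convert hIco 0 using 2
  on_goal 2 => convert hIco (1 / 4) using 2
  on_goal 3 => convert hIco (1 / 2) using 2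
  on_goal 4 => convert hIcc using 2
  all_goals
    ext x
    simp only [quarter, Set.mem_inter_iff, Set.mem_Icc, Set.mem_preimage, Set.mem_singleton_iff,
      Set.mem_Ico]
    split_ifs <;> grind

theorem measurable_quarter : Measurable quarter := by
  unfold quarter
  refine Measurable.ite ?_ measurable_const
    (Measurable.ite ?_ measurable_const (Measurable.ite ?_ measurable_const measurable_const)) <;>
    exact measurableSet_lt measurable_id measurable_const

theorem homDensity_blowup {V : Type} [Fintype V] [DecidableEq V] (H : OrientedGraph V)
    (A : Fin 4 → Fin 4 → ℝ) :
    homDensity H (fun x y => A (quarter x) (quarter y)) =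
      (1 / 4) ^ Fintype.card V * homSum H.edges A := by
  set μ := volume.restrict (Set.univ.pi fun _ : V => Set.Icc (0 : ℝ) 1)
  have : IsFiniteMeasure μ := isFiniteMeasure_restrict.2
    (isCompact_univ_pi fun _ => isCompact_Icc).measure_lt_top.ne
  set q : (V → ℝ) → V → Fin 4 := fun x v => quarter (x v)
  have hq : Measurable q :=
    measurable_pi_lambda _ fun v => measurable_quarter.comp (measurable_pi_apply v)
  have hfiber : ∀ τ, μ.map q {τ} = 4⁻¹ ^ Fintype.card V := fun τ => by
    rw [Measure.map_apply hq (measurableSet_singleton τ),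
      Measure.restrict_apply (hq (measurableSet_singleton τ))]
    have : q ⁻¹' {τ} ∩ Set.univ.pi (fun _ => Set.Icc 0 1) =
        Set.univ.pi fun v => Set.Icc (0 : ℝ) 1 ∩ quarter ⁻¹' {τ v} := by
      ext x
      simp only [Set.mem_inter_iff, Set.mem_preimage, Set.mem_singleton_iff, Set.mem_univ_pi,
        funext_iff, q]
      exact ⟨fun h v => ⟨h.2 v, h.1 v⟩, fun h => ⟨fun v => (h v).2, fun v => (h v).1⟩⟩
    rw [this, volume_pi_pi]
    simp [volume_Icc_inter_quarter_preimage]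
  set g : (V → Fin 4) → ℝ := fun τ => ∏ e ∈ H.edges, A (τ e.1) (τ e.2)
  show ∫ x, g (q x) ∂μ = _
  rw [← integral_map hq.aemeasurable (by fun_prop), integral_fintype .of_finite]
  simp [Measure.real, hfiber, homSum, Finset.mul_sum, g]

section Blowup

variable {N : Fin 4 → Fin 4 → ℝ}

theorem isTournamenton_blowup (hanti : ∀ a b, N b a = -N a b) (hbd : ∀ a b, |N a b| ≤ 1 / 2) :
    IsTournamenton fun x y => 1 / 2 + N (quarter x) (quarter y) := by
  refine ⟨?_, fun x _ y _ => ?_, fun x _ y _ => ?_⟩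
  · have hq : Measurable fun p : ℝ × ℝ => (quarter p.1, quarter p.2) :=
      (measurable_quarter.comp measurable_fst).prodMk (measurable_quarter.comp measurable_snd)
    exact (measurable_of_countable fun p : Fin 4 × Fin 4 => 1 / 2 + N p.1 p.2).comp hq
  · constructor <;> linarith [abs_le.1 (hbd (quarter x) (quarter y))]
  · simp only [hanti (quarter x)]
    ring

theorem not_ae_blowup_eq_half {i j : Fin 4} (hij : N i j ≠ 0) :
    ¬ ∀ᵐ p ∂squareMeasure, 1 / 2 + N (quarter p.1) (quarter p.2) = 1 / 2 := by
  set B := (Set.Icc (0 : ℝ) 1 ∩ quarter ⁻¹' {i}) ×ˢ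
    (Set.Icc (0 : ℝ) 1 ∩ quarter ⁻¹' {j})
  have hB : MeasurableSet B :=
    (measurableSet_Icc.inter (measurable_quarter (measurableSet_singleton i))).prod
      (measurableSet_Icc.inter (measurable_quarter (measurableSet_singleton j)))
  have hBμ : squareMeasure B = 4⁻¹ * 4⁻¹ := by
    rw [squareMeasure, Measure.restrict_apply hB, Set.inter_eq_left.2
      (Set.prod_mono Set.inter_subset_left Set.inter_subset_left), Measure.volume_eq_prod,
      Measure.prod_prod, volume_Icc_inter_quarter_preimage, volume_Icc_inter_quarter_preimage]
  rw [ae_iff]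
  intro h
  have : squareMeasure B ≤ 0 := h ▸ measure_mono fun p ⟨⟨_, hi⟩, ⟨_, hj⟩⟩ => by
    simp only [Set.mem_preimage, Set.mem_singleton_iff] at hi hj
    simpa [hi, hj] using hij
  rw [hBμ] at this
  simp at this

theorem not_quasirandomForcing_of_blowup {V : Type} [Fintype V] [DecidableEq V]
    {H : OrientedGraph V} (hanti : ∀ a b, N b a = -N a b) (hbd : ∀ a b, |N a b| ≤ 1 / 2)
    {i j : Fin 4} (hij : N i j ≠ 0)
    (hsum : homSum H.edges (fun a b => 1 / 2 + N a b) = 4 ^ Fintype.card V * (1 / 2) ^ #H.edges) :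
    ¬ QuasirandomForcing H := fun hH =>
  not_ae_blowup_eq_half hij <| hH _ (isTournamenton_blowup hanti hbd) <| by
    rw [homDensity_blowup H fun a b => 1 / 2 + N a b, hsum, ← mul_assoc, ← mul_pow]
    norm_num

end Blowup

noncomputable def blend (d s : ℝ) (a b : Fin 4) : ℝ :=
  (1 - s) * (1 / 4 * cyc4 a b) + s * (d * bip4 a b)

theorem blend_zero (d : ℝ) (a b : Fin 4) : blend d 0 a b = 1 / 4 * cyc4 a b := by
  simp [blend]

theorem blend_one (d : ℝ) (a b : Fin 4) : blend d 1 a b = d * bip4 a b := by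
  simp [blend]

theorem blend_antisymm (d s : ℝ) (a b : Fin 4) : blend d s b a = -blend d s a b := by
  simp only [blend, cyc4_antisymm a, bip4_antisymm a]
  ring

theorem abs_blend_le {d s : ℝ} (hd0 : 0 ≤ d) (hd1 : d ≤ 1 / 4)
    (hs : s ∈ Set.Icc (0 : ℝ) 1) (a b : Fin 4) : |blend d s a b| ≤ 1 / 2 := by
  have h1 := abs_le.1 (abs_cyc4_le a b)
  have h2 := abs_le.1 (abs_bip4_le a b)
  rw [blend, abs_le]
  constructor <;> nlinarith [hs.1, hs.2, mul_nonneg hs.1 hd0]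

theorem exists_blend_ne_zero {d : ℝ} (hd : 0 < d) (s : ℝ) : ∃ i j, blend d s i j ≠ 0 := by
  by_cases hs : s = 1
  · exact ⟨0, 2, by simp [blend, hs, cyc4, bip4, hd.ne']⟩
  · exact ⟨0, 1, by simp [blend, cyc4, bip4, sub_eq_zero, Ne.symm hs]⟩

theorem continuous_homSum_blend {V : Type} [Fintype V] [DecidableEq V] (F : Finset (V × V))
    (d : ℝ) : Continuous fun s => homSum F fun a b => 1 / 2 + blend d s a b := by
  simp only [homSum, blend]
  fun_prop

theorem exists_mem_Icc_eq_of_mul_nonpos {f : ℝ → ℝ} (hf : Continuous f) {c : ℝ}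
    (h : (f 0 - c) * (f 1 - c) ≤ 0) : ∃ s ∈ Set.Icc (0 : ℝ) 1, f s = c := by
  have hc : c ∈ Set.uIcc (f 0) (f 1) := by
    rw [Set.mem_uIcc]
    rcases mul_nonpos_iff.1 h with ⟨h0, h1⟩ | ⟨h0, h1⟩
    · exact Or.inr ⟨by linarith, by linarith⟩
    · exact Or.inl ⟨by linarith, by linarith⟩
  obtain ⟨s, hs, hfs⟩ := intermediate_value_uIcc hf.continuousOn hc
  rw [Set.uIcc_of_le zero_le_one] at hs
  exact ⟨s, hs, hfs⟩

theorem mul_nonpos_of_sign {α γ : ℤ} (hγ : γ = 1 ∨ γ = -1) (h : α * γ < 0)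
    {c a x y : ℝ} (hc : 0 < c) (ha : 0 < a) (hx : x = c * γ) (hy : |y - a * α| ≤ a / 2) :
    x * y ≤ 0 := by
  obtain ⟨hy₁, hy₂⟩ := abs_le.1 hy
  rcases hγ with rfl | rfl <;> rw [hx] <;> push_cast
  · have : (α : ℝ) ≤ -1 := by exact_mod_cast (by omega : α ≤ -1)
    nlinarith [mul_le_mul_of_nonneg_left this ha.le]
  · have : (1 : ℝ) ≤ α := by exact_mod_cast (by omega : 1 ≤ α)
    nlinarith [mul_le_mul_of_nonneg_left this ha.le]

theorem gammaCoeff_eq_one_or_eq_neg_one {ℓ : ℕ} (C : OrientedGraph (Fin ℓ)) :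
    gammaCoeff C = 1 ∨ gammaCoeff C = -1 := by
  unfold gammaCoeff
  split_ifs <;> simp

theorem IsCycleOrientation.exists_homSum_blend_eq {ℓ : ℕ} [NeZero ℓ] (hℓ : 4 ≤ ℓ)
    (hEv : Even ℓ) {C : OrientedGraph (Fin ℓ)} (hC : IsCycleOrientation C)
    (h : alphaCoeff C (fun _ : Fin 1 => 1) * gammaCoeff C < 0) :
    ∃ d s, 0 < d ∧ d ≤ 1 / 4 ∧ s ∈ Set.Icc (0 : ℝ) 1 ∧
      homSum C.edges (fun a b => 1 / 2 + blend d s a b) = 2 ^ ℓ := by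
  have hZ : 0 < homSum (cycD ℓ).edges cyc4 := by
    obtain ⟨k, rfl⟩ := hEv
    exact homSum_cycD_pos (by omega) (cyc4_pow_ne_zero (by omega))
  -- `d` makes the cubic error `d³ 8^ℓ` exactly half of the quadratic term `d² 2^ℓ`.
  set d : ℝ := (1 / 4) ^ ℓ / 2
  have hd : 0 < d := by positivity
  have hd4 : d * 4 ^ ℓ = 1 / 2 := by simp only [d, div_mul_eq_mul_div, ← mul_pow]; norm_num
  have hd1 : d ≤ 1 / 4 := by
    have := pow_le_of_le_one (by norm_num : (0 : ℝ) ≤ 1 / 4) (by norm_num) (n := ℓ) (by omega)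
    simp only [d]
    linarith
  set T : ℝ → ℝ := fun s => homSum C.edges fun a b => 1 / 2 + blend d s a b
  have hT0 : T 0 - 2 ^ ℓ = (1 / 4) ^ ℓ * homSum (cycD ℓ).edges cyc4 * gammaCoeff C := by
    simp only [T, blend_zero, hC.homSum_half_add_cyc4 (by omega)]
    ring
  have hT1 : |T 1 - 2 ^ ℓ - d ^ 2 * 2 ^ ℓ * alphaCoeff C (fun _ : Fin 1 => 1)| ≤
      d ^ 2 * 2 ^ ℓ / 2 := by
    have h8 : d ^ 3 * 8 ^ ℓ = d ^ 2 * 2 ^ ℓ / 2 := by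
      rw [show (8 : ℝ) = 2 * 4 by norm_num, mul_pow]
      linear_combination d ^ 2 * 2 ^ ℓ * hd4
    simpa only [T, blend_one, h8] using
      hC.abs_homSum_half_add_bip4_sub_le (by omega) hd.le (by linarith)
  obtain ⟨s, hs, hTs⟩ := exists_mem_Icc_eq_of_mul_nonpos (continuous_homSum_blend C.edges d)
    (mul_nonpos_of_sign (gammaCoeff_eq_one_or_eq_neg_one C) h (by positivity) (by positivity)
      hT0 hT1)
  exact ⟨d, s, hd, hd1, hs, hTs⟩

/-- if `α_C(2)` and `γ_C` are non-zero of different signs, then `C` is not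
quasirandom-forcing. -/
theorem not_quasirandomForcing_of_alpha2 (ℓ : ℕ) (hℓ : 4 ≤ ℓ) (hEv : Even ℓ)
    (C : OrientedGraph (Fin ℓ)) (hC : IsCycleOrientation C)
    (h : alphaCoeff C (fun _ : Fin 1 => 1) * gammaCoeff C < 0) :
    ¬ QuasirandomForcing C := by
  have : NeZero ℓ := ⟨by omega⟩
  obtain ⟨d, s, hd, hd1, hs, hsum⟩ := hC.exists_homSum_blend_eq hℓ hEv h
  obtain ⟨i, j, hij⟩ := exists_blend_ne_zero hd s
  refine not_quasirandomForcing_of_blowup (blend_antisymm d s) (abs_blend_le hd.le hd1 hs) hij ?_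
  rw [hsum, hC.card_edges (by omega), Fintype.card_fin, ← mul_pow]
  norm_num
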